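/- arXiv:math/0610145 — 6 statements merged into one kernel-verified Lean document; each statement's English description precedes it below -/
import Mathlib

section
/- For p > 1 there is a constant c = c(k,p) ≥ 1 such that for all z, η ∈ ℝ^k: c^{-1} |z-η| ≤ |V_p(z) - V_p(η)| / (1+|z|^2+|η|^2)^{(p-2)/4} ≤ c |z-η|. -/
open Real

noncomputable def V (p : ℝ) {k : ℕ} (z : EuclideanSpace ℝ (Fin k)) :
    EuclideanSpace ℝ (Fin k) :=
  ((1 + ‖z‖ ^ 2) ^ ((p - 2) / 4)) • z

/-!
With `α = (p - 2) / 4` we have `V p z = (1 + ‖z‖²)^α • z` and `1 + 2α = p / 2 > 0`.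

Both `‖A • z - B • η‖²` and `‖z - η‖²` are affine in `⟪z, η⟫ ∈ [-‖z‖‖η‖, ‖z‖‖η‖]`, so they are the
same convex combination of their values in the aligned and in the antipodal configuration. This
reduces the estimate to the scalar bounds `|g a ∓ g b| ≍ (1 + a² + b²)^α |a ∓ b|` for the radial
profile `g t = (1 + t²)^α t`: the `+` bound follows from `0 ≤ g b ≤ g a`, the `-` bound from the
mean value theorem, as `g' t = (1 + t²)^(α-1) (1 + (1 + 2α) t²)` lies within the factors
`min 1 (1 + 2α)` and `max 1 (1 + 2α)` of `(1 + t²)^α`.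
-/

theorem rpow_le_two_rpow_abs_mul_rpow {x y : ℝ} (hx : 0 < x) (hy : 0 < y) (hxy : x ≤ 2 * y)
    (hyx : y ≤ 2 * x) (α : ℝ) : x ^ α ≤ 2 ^ |α| * y ^ α := by
  rw [rpow_def_of_pos hx, rpow_def_of_pos hy, rpow_def_of_pos two_pos, ← exp_add, exp_le_exp]
  have hlog : |log x - log y| ≤ log 2 := by
    rw [abs_sub_le_iff, sub_le_iff_le_add, sub_le_iff_le_add, ← log_mul two_ne_zero hy.ne',
      ← log_mul two_ne_zero hx.ne']
    exact ⟨log_le_log hx hxy, log_le_log hy hyx⟩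
  have := (le_abs_self _).trans ((abs_mul (log x - log y) α).trans_le
    (mul_le_mul_of_nonneg_right hlog (abs_nonneg α)))
  linarith

section ConvexCombination

variable {E : Type*} [NormedAddCommGroup E] [InnerProductSpace ℝ E]

theorem exists_norm_smul_sub_smul_sq_eq (z η : E) :
    ∃ θ ∈ Set.Icc (0 : ℝ) 1, ∀ A B : ℝ, ‖A • z - B • η‖ ^ 2 =
      (1 - θ) * (A * ‖z‖ - B * ‖η‖) ^ 2 + θ * (A * ‖z‖ + B * ‖η‖) ^ 2 := by
  obtain ⟨θ, hθI, hθ⟩ : ∃ θ ∈ Set.Icc (0 : ℝ) 1,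
      2 * θ * (‖z‖ * ‖η‖) = ‖z‖ * ‖η‖ - inner ℝ z η := by
    have hcs := abs_real_inner_le_norm z η
    rcases (mul_nonneg (norm_nonneg z) (norm_nonneg η)).eq_or_lt with h | h
    · exact ⟨0, ⟨le_rfl, zero_le_one⟩, by simp [← h, abs_nonpos_iff.mp (h ▸ hcs)]⟩
    refine ⟨(‖z‖ * ‖η‖ - inner ℝ z η) / (2 * (‖z‖ * ‖η‖)),
      ⟨div_nonneg (by linarith [le_abs_self (inner ℝ z η)]) (by positivity),
        div_le_one_of_le₀ (by linarith [neg_abs_le (inner ℝ z η)]) (by positivity)⟩, ?_⟩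
    field_simp
    exact mul_div_cancel_left₀ _ h.ne'
  refine ⟨θ, hθI, fun A B => ?_⟩
  rw [norm_sub_sq_real, real_inner_smul_left, real_inner_smul_right, norm_smul, norm_smul,
    mul_pow, mul_pow, Real.norm_eq_abs, Real.norm_eq_abs, sq_abs, sq_abs]
  linear_combination (-2 * A * B) * hθ

theorem le_norm_smul_sub_smul {z η : E} {A B m : ℝ} (hm : 0 ≤ m)
    (hsub : m * |‖z‖ - ‖η‖| ≤ |A * ‖z‖ - B * ‖η‖|)
    (hadd : m * (‖z‖ + ‖η‖) ≤ |A * ‖z‖ + B * ‖η‖|) :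
    m * ‖z - η‖ ≤ ‖A • z - B • η‖ := by
  obtain ⟨θ, ⟨hθ0, hθ1⟩, hθ⟩ := exists_norm_smul_sub_smul_sq_eq z η
  have hsub2 : m ^ 2 * (‖z‖ - ‖η‖) ^ 2 ≤ (A * ‖z‖ - B * ‖η‖) ^ 2 := by
    simpa [mul_pow, sq_abs] using pow_le_pow_left₀ (by positivity) hsub 2
  have hadd2 : m ^ 2 * (‖z‖ + ‖η‖) ^ 2 ≤ (A * ‖z‖ + B * ‖η‖) ^ 2 := by
    simpa [mul_pow, sq_abs] using pow_le_pow_left₀ (by positivity) hadd 2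
  refine (pow_le_pow_iff_left₀ (by positivity) (norm_nonneg _) two_ne_zero).mp ?_
  -- `‖z - η‖²` is the case `A = B = 1` of the same convex combination
  rw [hθ, mul_pow, ← one_smul ℝ z, ← one_smul ℝ η, hθ 1 1, one_smul, one_smul]
  nlinarith [mul_le_mul_of_nonneg_left hsub2 (sub_nonneg.mpr hθ1),
    mul_le_mul_of_nonneg_left hadd2 hθ0]

theorem norm_smul_sub_smul_le {z η : E} {A B M : ℝ} (hM : 0 ≤ M)
    (hsub : |A * ‖z‖ - B * ‖η‖| ≤ M * |‖z‖ - ‖η‖|)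
    (hadd : |A * ‖z‖ + B * ‖η‖| ≤ M * (‖z‖ + ‖η‖)) :
    ‖A • z - B • η‖ ≤ M * ‖z - η‖ := by
  obtain ⟨θ, ⟨hθ0, hθ1⟩, hθ⟩ := exists_norm_smul_sub_smul_sq_eq z η
  have hsub2 : (A * ‖z‖ - B * ‖η‖) ^ 2 ≤ M ^ 2 * (‖z‖ - ‖η‖) ^ 2 := by
    simpa [mul_pow, sq_abs] using pow_le_pow_left₀ (abs_nonneg _) hsub 2
  have hadd2 : (A * ‖z‖ + B * ‖η‖) ^ 2 ≤ M ^ 2 * (‖z‖ + ‖η‖) ^ 2 := by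
    simpa [mul_pow, sq_abs] using pow_le_pow_left₀ (abs_nonneg _) hadd 2
  refine (pow_le_pow_iff_left₀ (norm_nonneg _) (by positivity) two_ne_zero).mp ?_
  rw [hθ, mul_pow, ← one_smul ℝ z, ← one_smul ℝ η, hθ 1 1, one_smul, one_smul]
  nlinarith [mul_le_mul_of_nonneg_left hsub2 (sub_nonneg.mpr hθ1),
    mul_le_mul_of_nonneg_left hadd2 hθ0]

end ConvexCombination

noncomputable def vProfile (α t : ℝ) : ℝ := (1 + t ^ 2) ^ α * t

section Profile

variable {α : ℝ}

theorem one_add_sq_rpow_eq (α t : ℝ) :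
    (1 + t ^ 2) ^ α = (1 + t ^ 2) ^ (α - 1) * (1 + t ^ 2) := by
  rw [← rpow_add_one (by positivity)]
  norm_num

theorem hasDerivAt_vProfile (α t : ℝ) :
    HasDerivAt (vProfile α) ((1 + t ^ 2) ^ (α - 1) * (1 + (1 + 2 * α) * t ^ 2)) t := by
  have h := (((hasDerivAt_pow 2 t).const_add 1).rpow_const (p := α)
    (Or.inl (by positivity))).mul (hasDerivAt_id' t)
  refine h.congr_deriv ?_
  rw [one_add_sq_rpow_eq α t]
  simp only [Nat.cast_ofNat]
  ring

theorem differentiable_vProfile (α : ℝ) : Differentiable ℝ (vProfile α) :=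
  fun t => (hasDerivAt_vProfile α t).differentiableAt

theorem deriv_vProfile_mem_Icc (α t : ℝ) :
    deriv (vProfile α) t ∈ Set.Icc (min 1 (1 + 2 * α) * (1 + t ^ 2) ^ α)
      (max 1 (1 + 2 * α) * (1 + t ^ 2) ^ α) := by
  have hP : 0 ≤ (1 + t ^ 2) ^ (α - 1) := by positivity
  have ht : 0 ≤ t ^ 2 := sq_nonneg t
  rw [(hasDerivAt_vProfile α t).deriv, one_add_sq_rpow_eq α t]
  constructor
  · have : min 1 (1 + 2 * α) * (1 + t ^ 2) ≤ 1 + (1 + 2 * α) * t ^ 2 := by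
      nlinarith [min_le_left 1 (1 + 2 * α), min_le_right 1 (1 + 2 * α)]
    nlinarith [mul_le_mul_of_nonneg_left this hP]
  · have : 1 + (1 + 2 * α) * t ^ 2 ≤ max 1 (1 + 2 * α) * (1 + t ^ 2) := by
      nlinarith [le_max_left 1 (1 + 2 * α), le_max_right 1 (1 + 2 * α)]
    nlinarith [mul_le_mul_of_nonneg_left this hP]

theorem vProfile_strictMono (hq : 0 < 1 + 2 * α) : StrictMono (vProfile α) :=
  strictMono_of_deriv_pos fun t =>
    (mul_pos (lt_min one_pos hq) (by positivity)).trans_le (deriv_vProfile_mem_Icc α t).1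

theorem vProfile_nonneg {t : ℝ} (ht : 0 ≤ t) : 0 ≤ vProfile α t :=
  mul_nonneg (by positivity) ht

variable {a b : ℝ}

theorem vProfile_sub_ge_of_nonneg (hα : 0 ≤ α) (hb : 0 ≤ b) (hba : b ≤ a) :
    (1 + a ^ 2) ^ α * (a - b) ≤ vProfile α a - vProfile α b := by
  have : (1 + b ^ 2) ^ α ≤ (1 + a ^ 2) ^ α := rpow_le_rpow (by positivity) (by nlinarith) hα
  unfold vProfile
  nlinarith

theorem vProfile_sub_le_of_nonpos (hα : α ≤ 0) (hb : 0 ≤ b) (hba : b ≤ a) :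
    vProfile α a - vProfile α b ≤ (1 + a ^ 2) ^ α * (a - b) := by
  have : (1 + a ^ 2) ^ α ≤ (1 + b ^ 2) ^ α :=
    rpow_le_rpow_of_nonpos (by positivity) (by nlinarith) hα
  unfold vProfile
  nlinarith

theorem vProfile_sub_le_of_nonneg (hα : 0 ≤ α) (hb : 0 ≤ b) (hba : b ≤ a) :
    vProfile α a - vProfile α b ≤ max 1 (1 + 2 * α) * (1 + a ^ 2) ^ α * (a - b) := by
  refine (convex_Icc b a).image_sub_le_mul_sub_of_deriv_le
    (differentiable_vProfile α).continuous.continuousOn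
    (differentiable_vProfile α).differentiableOn (fun t ht => ?_)
    b ⟨le_rfl, hba⟩ a ⟨hba, le_rfl⟩ hba
  rw [interior_Icc] at ht
  have : (1 + t ^ 2) ^ α ≤ (1 + a ^ 2) ^ α :=
    rpow_le_rpow (by positivity) (by nlinarith [ht.1, ht.2]) hα
  exact (deriv_vProfile_mem_Icc α t).2.trans
    (mul_le_mul_of_nonneg_left this (zero_le_one.trans (le_max_left _ _)))

theorem vProfile_sub_ge_of_nonpos (hα : α ≤ 0) (hq : 0 ≤ 1 + 2 * α) (hb : 0 ≤ b)
    (hba : b ≤ a) :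
    min 1 (1 + 2 * α) * (1 + a ^ 2) ^ α * (a - b) ≤ vProfile α a - vProfile α b := by
  refine (convex_Icc b a).mul_sub_le_image_sub_of_le_deriv
    (differentiable_vProfile α).continuous.continuousOn
    (differentiable_vProfile α).differentiableOn (fun t ht => ?_)
    b ⟨le_rfl, hba⟩ a ⟨hba, le_rfl⟩ hba
  rw [interior_Icc] at ht
  have : (1 + a ^ 2) ^ α ≤ (1 + t ^ 2) ^ α :=
    rpow_le_rpow_of_nonpos (by positivity) (by nlinarith [ht.1, ht.2]) hα
  exact (mul_le_mul_of_nonneg_left this (le_min zero_le_one hq)).trans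
    (deriv_vProfile_mem_Icc α t).1

theorem vProfile_sub_mem_Icc (hq : 0 < 1 + 2 * α) (hb : 0 ≤ b) (hba : b ≤ a) :
    vProfile α a - vProfile α b ∈ Set.Icc (min 1 (1 + 2 * α) * (1 + a ^ 2) ^ α * (a - b))
      (max 1 (1 + 2 * α) * (1 + a ^ 2) ^ α * (a - b)) := by
  have hA : 0 ≤ (1 + a ^ 2) ^ α * (a - b) := mul_nonneg (by positivity) (sub_nonneg.mpr hba)
  rcases le_total 0 α with hα | hα
  · refine ⟨?_, vProfile_sub_le_of_nonneg hα hb hba⟩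
    rw [mul_assoc]
    exact (mul_le_of_le_one_left hA (min_le_left _ _)).trans (vProfile_sub_ge_of_nonneg hα hb hba)
  · refine ⟨vProfile_sub_ge_of_nonpos hα hq.le hb hba, ?_⟩
    rw [mul_assoc]
    exact (vProfile_sub_le_of_nonpos hα hb hba).trans (le_mul_of_one_le_left hA (le_max_left _ _))

theorem vProfile_add_mem_Icc (hq : 0 < 1 + 2 * α) (hb : 0 ≤ b) (hba : b ≤ a) :
    vProfile α a + vProfile α b ∈ Set.Icc ((1 + a ^ 2) ^ α * (a + b) / 2)
      (2 * (1 + a ^ 2) ^ α * (a + b)) := by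
  have hgb := vProfile_nonneg (α := α) hb
  have hgba := (vProfile_strictMono hq).monotone hba
  have hga : vProfile α a = (1 + a ^ 2) ^ α * a := rfl
  have hA : 0 ≤ (1 + a ^ 2) ^ α := by positivity
  constructor <;> nlinarith [mul_le_mul_of_nonneg_left hba hA, mul_nonneg hA hb]

theorem one_add_sq_rpow_comparable (hb : 0 ≤ b) (hba : b ≤ a) :
    (1 + a ^ 2 + b ^ 2) ^ α ≤ 2 ^ |α| * (1 + a ^ 2) ^ α ∧
      (1 + a ^ 2) ^ α ≤ 2 ^ |α| * (1 + a ^ 2 + b ^ 2) ^ α := by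
  have hb2 : b ^ 2 ≤ a ^ 2 := pow_le_pow_left₀ hb hba 2
  exact ⟨rpow_le_two_rpow_abs_mul_rpow (by positivity) (by positivity) (by linarith)
      (by nlinarith) α, rpow_le_two_rpow_abs_mul_rpow (by positivity) (by positivity)
      (by nlinarith) (by nlinarith) α⟩

theorem vProfile_lower_bounds (hq : 0 < 1 + 2 * α) (ha : 0 ≤ a) (hb : 0 ≤ b) :
    min 1 (1 + 2 * α) / (2 * 2 ^ |α|) * (1 + a ^ 2 + b ^ 2) ^ α * |a - b|
        ≤ |vProfile α a - vProfile α b| ∧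
      min 1 (1 + 2 * α) / (2 * 2 ^ |α|) * (1 + a ^ 2 + b ^ 2) ^ α * (a + b)
        ≤ |vProfile α a + vProfile α b| := by
  wlog hba : b ≤ a generalizing a b
  · rw [abs_sub_comm a, abs_sub_comm (vProfile α a), add_comm a, add_comm (vProfile α a),
      add_right_comm]
    exact this hb ha (le_of_not_ge hba)
  obtain ⟨hwA, -⟩ := one_add_sq_rpow_comparable (α := α) hb hba
  obtain ⟨hsub, -⟩ := vProfile_sub_mem_Icc hq hb hba
  obtain ⟨hadd, -⟩ := vProfile_add_mem_Icc hq hb hba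
  have hm : min 1 (1 + 2 * α) / (2 * 2 ^ |α|) * (1 + a ^ 2 + b ^ 2) ^ α
      ≤ min 1 (1 + 2 * α) * (1 + a ^ 2) ^ α / 2 := by
    rw [div_mul_eq_mul_div, div_le_div_iff₀ (by positivity) two_pos]
    nlinarith [mul_le_mul_of_nonneg_left hwA (le_min zero_le_one hq.le)]
  have hmin : 0 ≤ min 1 (1 + 2 * α) * (1 + a ^ 2) ^ α := by positivity
  have hmin1 : min 1 (1 + 2 * α) * (1 + a ^ 2) ^ α ≤ (1 + a ^ 2) ^ α :=
    mul_le_of_le_one_left (by positivity) (min_le_left _ _)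
  rw [abs_of_nonneg (sub_nonneg.mpr hba)]
  constructor
  · nlinarith [mul_le_mul_of_nonneg_right hm (sub_nonneg.mpr hba), le_abs_self
      (vProfile α a - vProfile α b)]
  · nlinarith [mul_le_mul_of_nonneg_right hm (add_nonneg ha hb), le_abs_self
      (vProfile α a + vProfile α b)]

theorem vProfile_upper_bounds (hq : 0 < 1 + 2 * α) (ha : 0 ≤ a) (hb : 0 ≤ b) :
    |vProfile α a - vProfile α b|
        ≤ 2 * 2 ^ |α| * max 1 (1 + 2 * α) * (1 + a ^ 2 + b ^ 2) ^ α * |a - b| ∧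
      |vProfile α a + vProfile α b|
        ≤ 2 * 2 ^ |α| * max 1 (1 + 2 * α) * (1 + a ^ 2 + b ^ 2) ^ α * (a + b) := by
  wlog hba : b ≤ a generalizing a b
  · rw [abs_sub_comm a, abs_sub_comm (vProfile α a), add_comm a, add_comm (vProfile α a),
      add_right_comm]
    exact this hb ha (le_of_not_ge hba)
  obtain ⟨-, hAw⟩ := one_add_sq_rpow_comparable (α := α) hb hba
  obtain ⟨hsub₀, hsub⟩ := vProfile_sub_mem_Icc hq hb hba
  obtain ⟨hadd₀, hadd⟩ := vProfile_add_mem_Icc hq hb hba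
  have hM : 2 * max 1 (1 + 2 * α) * (1 + a ^ 2) ^ α
      ≤ 2 * 2 ^ |α| * max 1 (1 + 2 * α) * (1 + a ^ 2 + b ^ 2) ^ α := by
    nlinarith [mul_le_mul_of_nonneg_left hAw
      (by positivity : (0 : ℝ) ≤ 2 * max 1 (1 + 2 * α))]
  have hA : 0 ≤ (1 + a ^ 2) ^ α := by positivity
  have hmax1 : (1 + a ^ 2) ^ α ≤ max 1 (1 + 2 * α) * (1 + a ^ 2) ^ α :=
    le_mul_of_one_le_left hA (le_max_left _ _)
  have hmin : 0 ≤ min 1 (1 + 2 * α) * (1 + a ^ 2) ^ α * (a - b) :=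
    mul_nonneg (by positivity) (sub_nonneg.mpr hba)
  rw [abs_of_nonneg (sub_nonneg.mpr hba), abs_of_nonneg (hmin.trans hsub₀),
    abs_of_nonneg ((by positivity : (0 : ℝ) ≤ (1 + a ^ 2) ^ α * (a + b) / 2).trans hadd₀)]
  constructor
  · nlinarith [mul_le_mul_of_nonneg_right hM (sub_nonneg.mpr hba)]
  · nlinarith [mul_le_mul_of_nonneg_right hM (add_nonneg ha hb)]

end Profile

section RadialMap

variable {E : Type*} [NormedAddCommGroup E] [InnerProductSpace ℝ E] {α : ℝ}

theorem le_norm_one_add_sq_rpow_smul_sub (hq : 0 < 1 + 2 * α) (z η : E) :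
    min 1 (1 + 2 * α) / (2 * 2 ^ |α|) * (1 + ‖z‖ ^ 2 + ‖η‖ ^ 2) ^ α * ‖z - η‖
      ≤ ‖(1 + ‖z‖ ^ 2) ^ α • z - (1 + ‖η‖ ^ 2) ^ α • η‖ :=
  have h := vProfile_lower_bounds hq (norm_nonneg z) (norm_nonneg η)
  le_norm_smul_sub_smul (by positivity) h.1 h.2

theorem norm_one_add_sq_rpow_smul_sub_le (hq : 0 < 1 + 2 * α) (z η : E) :
    ‖(1 + ‖z‖ ^ 2) ^ α • z - (1 + ‖η‖ ^ 2) ^ α • η‖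
      ≤ 2 * 2 ^ |α| * max 1 (1 + 2 * α) * (1 + ‖z‖ ^ 2 + ‖η‖ ^ 2) ^ α * ‖z - η‖ :=
  have h := vProfile_upper_bounds hq (norm_nonneg z) (norm_nonneg η)
  norm_smul_sub_smul_le (by positivity) h.1 h.2

end RadialMap

theorem stmt_2 {k : ℕ} (p : ℝ) (hp : 1 < p) :
    ∃ c : ℝ, 1 ≤ c ∧ ∀ z η : EuclideanSpace ℝ (Fin k),
      c⁻¹ * ‖z - η‖ ≤ ‖V p z - V p η‖ / (1 + ‖z‖ ^ 2 + ‖η‖ ^ 2) ^ ((p - 2) / 4) ∧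
      ‖V p z - V p η‖ / (1 + ‖z‖ ^ 2 + ‖η‖ ^ 2) ^ ((p - 2) / 4) ≤ c * ‖z - η‖ := by
  have hq : 0 < 1 + 2 * ((p - 2) / 4) := by linarith
  set α := (p - 2) / 4
  set m := min 1 (1 + 2 * α) / (2 * 2 ^ |α|)
  set M := 2 * 2 ^ |α| * max 1 (1 + 2 * α)
  have hm : 0 < m := by positivity
  have hM : 1 ≤ M := by
    have := one_le_rpow one_le_two (abs_nonneg α)
    nlinarith [le_max_left 1 (1 + 2 * α)]
  refine ⟨max M m⁻¹, hM.trans (le_max_left _ _), fun z η => ?_⟩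
  have hw : 0 < (1 + ‖z‖ ^ 2 + ‖η‖ ^ 2) ^ α := by positivity
  have hV : V p z - V p η = (1 + ‖z‖ ^ 2) ^ α • z - (1 + ‖η‖ ^ 2) ^ α • η := rfl
  rw [hV, le_div_iff₀ hw, div_le_iff₀ hw, mul_right_comm, mul_right_comm (max M m⁻¹)]
  constructor
  · calc (max M m⁻¹)⁻¹ * (1 + ‖z‖ ^ 2 + ‖η‖ ^ 2) ^ α * ‖z - η‖
        ≤ m * (1 + ‖z‖ ^ 2 + ‖η‖ ^ 2) ^ α * ‖z - η‖ := by
          gcongr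
          exact inv_le_of_inv_le₀ hm (le_max_right _ _)
      _ ≤ _ := le_norm_one_add_sq_rpow_smul_sub hq z η
  · calc _ ≤ M * (1 + ‖z‖ ^ 2 + ‖η‖ ^ 2) ^ α * ‖z - η‖ :=
          norm_one_add_sq_rpow_smul_sub_le hq z η
      _ ≤ _ := by gcongr; exact le_max_left _ _
end

section
/- If 1 < p < 2, then for every z ∈ ℝ^k: (1/√2) min{|z|, |z|^{p/2}} ≤ |V_p(z)| ≤ min{|z|, |z|^{p/2}}. -/
open Real

lemma key_scalar (p r : ℝ) (hp1 : 1 < p) (hp2 : p < 2) (hr : 0 ≤ r) :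
    (1 / Real.sqrt 2) * min r (r ^ (p / 2)) ≤ (1 + r ^ 2) ^ ((p - 2) / 4) * r ∧
    (1 + r ^ 2) ^ ((p - 2) / 4) * r ≤ min r (r ^ (p / 2)) := by
  rcases eq_or_lt_of_le hr with hr0 | hr'
  · simp [← hr0, Real.zero_rpow (by positivity : p / 2 ≠ 0)]
  have hbase : (1 : ℝ) ≤ 1 + r ^ 2 := by nlinarith
  have hbpos : (0 : ℝ) < 1 + r ^ 2 := by positivity
  have hexp : (p - 2) / 4 ≤ 0 := by linarith
  have hc1 : (1 + r ^ 2) ^ ((p - 2) / 4) ≤ 1 :=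
    Real.rpow_le_one_of_one_le_of_nonpos hbase hexp
  have hcpos : 0 < (1 + r ^ 2) ^ ((p - 2) / 4) := Real.rpow_pos_of_pos hbpos _
  have h2 : ((r ^ 2 : ℝ)) ^ ((p - 2) / 4) = r ^ ((p - 2) / 2) := by
    rw [← Real.rpow_natCast r 2, ← Real.rpow_mul hr]
    ring_nf
  have hsplit : r ^ ((p - 2) / 2) * r = r ^ (p / 2) := by
    calc r ^ ((p - 2) / 2) * r = r ^ ((p - 2) / 2) * r ^ (1 : ℝ) := by
          rw [Real.rpow_one]
      _ = r ^ ((p - 2) / 2 + 1) := (Real.rpow_add hr' _ _).symm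
      _ = r ^ (p / 2) := by ring_nf
  have hsqrt : 1 / Real.sqrt 2 = (2 : ℝ) ^ (-(1 / 2) : ℝ) := by
    rw [Real.rpow_neg (by norm_num), Real.sqrt_eq_rpow, one_div]
  have hconst : (1 : ℝ) / Real.sqrt 2 ≤ (2 : ℝ) ^ ((p - 2) / 4) := by
    rw [hsqrt]
    exact Real.rpow_le_rpow_of_exponent_le (by norm_num) (by linarith)
  constructor
  · -- lower bound
    rcases le_or_gt r 1 with hle1 | hge1
    · have hmin : min r (r ^ (p / 2)) = r := by
        refine min_eq_left ?_
        have := Real.rpow_le_rpow_of_exponent_ge hr' hle1 (by linarith : p / 2 ≤ 1)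
        rwa [Real.rpow_one] at this
      have h2le : (2 : ℝ) ^ ((p - 2) / 4) ≤ (1 + r ^ 2) ^ ((p - 2) / 4) :=
        Real.rpow_le_rpow_of_nonpos hbpos (by nlinarith) hexp
      rw [hmin]
      have : (1 / Real.sqrt 2) ≤ (1 + r ^ 2) ^ ((p - 2) / 4) := le_trans hconst h2le
      exact mul_le_mul_of_nonneg_right this hr
    · have hmin : min r (r ^ (p / 2)) = r ^ (p / 2) := by
        refine min_eq_right ?_
        have := Real.rpow_le_rpow_of_exponent_le hge1.le (by linarith : p / 2 ≤ 1)
        rwa [Real.rpow_one] at this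
      rw [hmin]
      have h3 : (2 * r ^ 2 : ℝ) ^ ((p - 2) / 4) ≤ (1 + r ^ 2) ^ ((p - 2) / 4) :=
        Real.rpow_le_rpow_of_nonpos hbpos (by nlinarith) hexp
      have h4 : (2 * r ^ 2 : ℝ) ^ ((p - 2) / 4)
          = (2 : ℝ) ^ ((p - 2) / 4) * r ^ ((p - 2) / 2) := by
        rw [Real.mul_rpow (by norm_num) (by positivity), h2]
      have h5 : (2 : ℝ) ^ ((p - 2) / 4) * r ^ (p / 2)
          ≤ (1 + r ^ 2) ^ ((p - 2) / 4) * r := by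
        have := mul_le_mul_of_nonneg_right h3 hr
        rw [h4, mul_assoc, hsplit] at this
        exact this
      refine le_trans ?_ h5
      exact mul_le_mul_of_nonneg_right hconst (by positivity)
  · -- upper bound
    refine le_min ?_ ?_
    · calc (1 + r ^ 2) ^ ((p - 2) / 4) * r ≤ 1 * r :=
            mul_le_mul_of_nonneg_right hc1 hr
        _ = r := one_mul r
    · have h1 : (1 + r ^ 2) ^ ((p - 2) / 4) ≤ ((r ^ 2 : ℝ)) ^ ((p - 2) / 4) :=
        Real.rpow_le_rpow_of_nonpos (by positivity) (by nlinarith) hexp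
      calc (1 + r ^ 2) ^ ((p - 2) / 4) * r
          ≤ ((r ^ 2 : ℝ)) ^ ((p - 2) / 4) * r := mul_le_mul_of_nonneg_right h1 hr
        _ = r ^ ((p - 2) / 2) * r := by rw [h2]
        _ = r ^ (p / 2) := hsplit

theorem stmt_3 {k : ℕ} (p : ℝ) (hp1 : 1 < p) (hp2 : p < 2)
    (z : EuclideanSpace ℝ (Fin k)) :
    (1 / Real.sqrt 2) * min ‖z‖ (‖z‖ ^ (p / 2)) ≤ ‖V p z‖ ∧
    ‖V p z‖ ≤ min ‖z‖ (‖z‖ ^ (p / 2)) := by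
  have hnorm : ‖V p z‖ = (1 + ‖z‖ ^ 2) ^ ((p - 2) / 4) * ‖z‖ := by
    rw [V, norm_smul, Real.norm_eq_abs, abs_of_pos]
    exact Real.rpow_pos_of_pos (by positivity) _
  rw [hnorm]
  exact key_scalar p ‖z‖ hp1 hp2 (norm_nonneg z)
end

section
/- If 1 < p < 2, there is a constant c = c(k,p) such that for all z, η ∈ ℝ^k: |V_p(z) - V_p(η)| ≤ c |V_p(z - η)|. -/
/-! With `α = (p - 2) / 4 ∈ [-1/2, 0]` and `V z = (1 + ‖z‖²) ^ α • z`, the constant `c = 3` works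
in any real normed space. The key fact is that `x ↦ x ^ α * x = x ^ (α + 1)` is monotone for
`α ≥ -1`. Applied to `x = 1 + s²` (after squaring, with exponent `2α ≥ -1`) it shows that
`s ↦ (1 + s²) ^ α * s`, i.e. `‖V z‖` as a function of `‖z‖`, is monotone; applied with exponent `α`
it bounds the difference `(1 + ‖η‖²) ^ α - (1 + ‖z‖²) ^ α` of the weights. When `‖z - η‖ ≥ ‖η‖`
the claim follows from the triangle inequality; otherwise write
`V z - V η = (1 + ‖z‖²) ^ α • (z - η) + ((1 + ‖z‖²) ^ α - (1 + ‖η‖²) ^ α) • η`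
and control the second term by the difference of weights. -/

open Real

section RealInequalities

variable {α x y s t : ℝ}

lemma rpow_mul_self_le_rpow_mul_self (hα : -1 ≤ α) (hx : 0 < x) (hxy : x ≤ y) :
    x ^ α * x ≤ y ^ α * y := by
  rw [← rpow_add_one hx.ne', ← rpow_add_one (hx.trans_le hxy).ne']
  exact rpow_le_rpow hx.le hxy (by linarith)

lemma rpow_sub_rpow_le (hα : -1 ≤ α) (hx : 0 < x) (hxy : x ≤ y) :
    x ^ α - y ^ α ≤ x ^ α * (y - x) / y := by
  have hy : 0 < y := hx.trans_le hxy
  have hmono : x ^ α * x / y ≤ y ^ α :=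
    (div_le_iff₀ hy).2 (rpow_mul_self_le_rpow_mul_self hα hx hxy)
  have hsplit : x ^ α * (y - x) / y = x ^ α - x ^ α * x / y := by field_simp
  rw [hsplit]
  exact sub_le_sub_left hmono _

lemma one_add_sq_rpow_le_of_le (hα : α ≤ 0) (hs : 0 ≤ s) (hst : s ≤ t) :
    (1 + t ^ 2) ^ α ≤ (1 + s ^ 2) ^ α :=
  rpow_le_rpow_of_nonpos (by positivity) (by nlinarith) hα

lemma one_add_sq_rpow_mul_le_of_le (hα : -2⁻¹ ≤ α) (hs : 0 ≤ s) (hst : s ≤ t) :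
    (1 + s ^ 2) ^ α * s ≤ (1 + t ^ 2) ^ α * t := by
  have hpos : ∀ u : ℝ, 0 < 1 + u ^ 2 := fun u => by positivity
  have hsq : ∀ u : ℝ, ((1 + u ^ 2) ^ α * u) ^ 2
      = (1 + u ^ 2) ^ (2 * α) * (1 + u ^ 2) * (u ^ 2 / (1 + u ^ 2)) := fun u => by
    rw [show 2 * α = α * (2 : ℕ) by push_cast; ring, rpow_mul_natCast (hpos u).le]
    field_simp
  have hweight := rpow_mul_self_le_rpow_mul_self (α := 2 * α) (by linarith) (hpos s)
    (show 1 + s ^ 2 ≤ 1 + t ^ 2 by nlinarith)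
  have hfrac : s ^ 2 / (1 + s ^ 2) ≤ t ^ 2 / (1 + t ^ 2) := by
    rw [div_le_div_iff₀ (hpos s) (hpos t)]
    nlinarith
  have hs' : 0 ≤ (1 + s ^ 2) ^ α * s := by positivity
  have ht' : 0 ≤ (1 + t ^ 2) ^ α * t := mul_nonneg (by positivity) (hs.trans hst)
  rw [← pow_le_pow_iff_left₀ hs' ht' two_ne_zero, hsq, hsq]
  exact mul_le_mul hweight hfrac (by positivity) (by positivity)

lemma one_add_sq_rpow_mul_le_two_mul (hα : α ≤ 0) (ht : 0 ≤ t) :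
    (1 + (2 * t) ^ 2) ^ α * (2 * t) ≤ 2 * ((1 + t ^ 2) ^ α * t) := by
  have := one_add_sq_rpow_le_of_le hα ht (by linarith : t ≤ 2 * t)
  nlinarith

lemma one_add_sq_rpow_sub_mul_le {a b : ℝ} (hα : -1 ≤ α) (hα0 : α ≤ 0) (ht : 0 ≤ t)
    (hab : a - b ≤ t) (hba : b ≤ a) (htb : t ≤ b) :
    ((1 + b ^ 2) ^ α - (1 + a ^ 2) ^ α) * b ≤ 2 * ((1 + t ^ 2) ^ α * t) := by
  have hb : 0 ≤ b := ht.trans htb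
  have hweight_diff : (1 + b ^ 2) ^ α - (1 + a ^ 2) ^ α
      ≤ (1 + b ^ 2) ^ α * (a ^ 2 - b ^ 2) / (1 + a ^ 2) := by
    have := rpow_sub_rpow_le hα (by positivity : (0 : ℝ) < 1 + b ^ 2)
      (show 1 + b ^ 2 ≤ 1 + a ^ 2 by nlinarith)
    rwa [add_sub_add_left_eq_sub] at this
  have hratio : (a ^ 2 - b ^ 2) * b / (1 + a ^ 2) ≤ 2 * t := by
    rw [div_le_iff₀ (by positivity)]
    have hsum : (a + b) * b ≤ 2 * (1 + a ^ 2) := by nlinarith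
    nlinarith [mul_le_mul_of_nonneg_right hab (mul_nonneg (by linarith : 0 ≤ a + b) hb),
      mul_le_mul_of_nonneg_left hsum ht]
  calc ((1 + b ^ 2) ^ α - (1 + a ^ 2) ^ α) * b
      ≤ (1 + b ^ 2) ^ α * (a ^ 2 - b ^ 2) / (1 + a ^ 2) * b :=
        mul_le_mul_of_nonneg_right hweight_diff hb
    _ = (1 + b ^ 2) ^ α * ((a ^ 2 - b ^ 2) * b / (1 + a ^ 2)) := by ring
    _ ≤ (1 + b ^ 2) ^ α * (2 * t) := mul_le_mul_of_nonneg_left hratio (by positivity)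
    _ ≤ (1 + t ^ 2) ^ α * (2 * t) :=
        mul_le_mul_of_nonneg_right (one_add_sq_rpow_le_of_le hα0 ht htb) (by linarith)
    _ = 2 * ((1 + t ^ 2) ^ α * t) := by ring

end RealInequalities

section RpowWeighted

variable {E : Type*} [NormedAddCommGroup E] [NormedSpace ℝ E] {α : ℝ}

noncomputable def rpowWeighted (α : ℝ) (x : E) : E :=
  (1 + ‖x‖ ^ 2) ^ α • x

lemma norm_rpowWeighted (x : E) : ‖rpowWeighted α x‖ = (1 + ‖x‖ ^ 2) ^ α * ‖x‖ := by
  rw [rpowWeighted, norm_smul, norm_of_nonneg (by positivity)]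

lemma rpowWeighted_neg (x : E) : rpowWeighted α (-x) = -rpowWeighted α x := by
  simp only [rpowWeighted, norm_neg, smul_neg]

lemma norm_rpowWeighted_sub_le_of_norm_le_norm_sub (hα : -2⁻¹ ≤ α) (hα0 : α ≤ 0) {x y : E}
    (hy : ‖y‖ ≤ ‖x - y‖) :
    ‖rpowWeighted α x - rpowWeighted α y‖ ≤ 3 * ‖rpowWeighted α (x - y)‖ := by
  set t := ‖x - y‖
  have ht : 0 ≤ t := norm_nonneg _
  have hx : ‖x‖ ≤ 2 * t := by
    have := norm_le_norm_add_norm_sub' x y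
    linarith
  have hVx : (1 + ‖x‖ ^ 2) ^ α * ‖x‖ ≤ 2 * ((1 + t ^ 2) ^ α * t) :=
    (one_add_sq_rpow_mul_le_of_le hα (norm_nonneg x) hx).trans
      (one_add_sq_rpow_mul_le_two_mul hα0 ht)
  have hVy : (1 + ‖y‖ ^ 2) ^ α * ‖y‖ ≤ (1 + t ^ 2) ^ α * t :=
    one_add_sq_rpow_mul_le_of_le hα (norm_nonneg y) hy
  calc ‖rpowWeighted α x - rpowWeighted α y‖
      ≤ ‖rpowWeighted α x‖ + ‖rpowWeighted α y‖ := norm_sub_le _ _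
    _ ≤ 3 * ‖rpowWeighted α (x - y)‖ := by
      rw [norm_rpowWeighted, norm_rpowWeighted, norm_rpowWeighted]
      linarith

lemma norm_rpowWeighted_sub_le_of_norm_sub_le (hα : -1 ≤ α) (hα0 : α ≤ 0) {x y : E}
    (hyx : ‖y‖ ≤ ‖x‖) (hxy : ‖x - y‖ ≤ ‖y‖) :
    ‖rpowWeighted α x - rpowWeighted α y‖ ≤ 3 * ‖rpowWeighted α (x - y)‖ := by
  set a := ‖x‖
  set b := ‖y‖
  set t := ‖x - y‖
  have ht : 0 ≤ t := norm_nonneg _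
  have hab : a - b ≤ t := norm_sub_norm_le x y
  have hwa : (1 + a ^ 2) ^ α ≤ (1 + t ^ 2) ^ α := one_add_sq_rpow_le_of_le hα0 ht (hxy.trans hyx)
  have hwab : (1 + a ^ 2) ^ α ≤ (1 + b ^ 2) ^ α := one_add_sq_rpow_le_of_le hα0 (norm_nonneg y) hyx
  have hdecomp : rpowWeighted α x - rpowWeighted α y
      = (1 + a ^ 2) ^ α • (x - y) + ((1 + a ^ 2) ^ α - (1 + b ^ 2) ^ α) • y := by
    simp only [rpowWeighted, smul_sub, sub_smul, a, b]
    abel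
  have hnorm : ‖rpowWeighted α x - rpowWeighted α y‖
      ≤ (1 + a ^ 2) ^ α * t + ((1 + b ^ 2) ^ α - (1 + a ^ 2) ^ α) * b := by
    rw [hdecomp]
    refine (norm_add_le _ _).trans_eq ?_
    rw [norm_smul, norm_smul, norm_of_nonneg (by positivity), norm_of_nonpos (by linarith)]
    ring
  have hsecond : ((1 + b ^ 2) ^ α - (1 + a ^ 2) ^ α) * b ≤ 2 * ((1 + t ^ 2) ^ α * t) :=
    one_add_sq_rpow_sub_mul_le hα hα0 ht hab hyx hxy
  have hfirst : (1 + a ^ 2) ^ α * t ≤ (1 + t ^ 2) ^ α * t := mul_le_mul_of_nonneg_right hwa ht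
  rw [norm_rpowWeighted]
  linarith

lemma norm_rpowWeighted_sub_le (hα : -2⁻¹ ≤ α) (hα0 : α ≤ 0) (x y : E) :
    ‖rpowWeighted α x - rpowWeighted α y‖ ≤ 3 * ‖rpowWeighted α (x - y)‖ := by
  wlog hyx : ‖y‖ ≤ ‖x‖ generalizing x y
  · rw [norm_sub_rev, ← neg_sub y x, rpowWeighted_neg, norm_neg]
    exact this y x (le_of_not_ge hyx)
  rcases le_total ‖y‖ ‖x - y‖ with hy | hxy
  · exact norm_rpowWeighted_sub_le_of_norm_le_norm_sub hα hα0 hy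
  · exact norm_rpowWeighted_sub_le_of_norm_sub_le (by linarith) hα0 hyx hxy

end RpowWeighted

theorem stmt_5 {k : ℕ} (p : ℝ) (hp1 : 1 < p) (hp2 : p < 2) :
    ∃ c : ℝ, 0 < c ∧ ∀ z η : EuclideanSpace ℝ (Fin k),
      ‖V p z - V p η‖ ≤ c * ‖V p (z - η)‖ := by
  refine ⟨3, three_pos, fun z η => ?_⟩
  exact norm_rpowWeighted_sub_le (α := (p - 2) / 4) (by linarith) (by linarith) z η
end

section
/- If p ≥ 2 and M > 0, there is a constant c = c(k,p,M) such that for all z, η ∈ ℝ^k with |η| ≤ M: |V_p(z) - V_p(η)| ≤ c |V_p(z - η)|. -/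
/-!
With `α = (p - 2) / 4 ≥ 0`, the map `x ↦ (1 + ‖x‖²)^α • x` has derivative of norm at most
`(1 + 2α)(1 + ‖x‖²)^α`. Writing `d = ‖z - η‖`, both `z` and `η` lie in the ball of radius
`M + d`, so the mean value theorem gives `‖V z - V η‖ ≤ (1 + 2α)(1 + (M + d)²)^α d`, and the
weight splits as `1 + (M + d)² ≤ 2(1 + M²)(1 + d²)`; the factor `(1 + d²)^α d` is `‖V (z - η)‖`.
-/

open Real

section

variable {E : Type*} [NormedAddCommGroup E] [InnerProductSpace ℝ E]

theorem hasFDerivAt_one_add_norm_sq_rpow_smul (α : ℝ) (x : E) :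
    HasFDerivAt (fun y : E => (1 + ‖y‖ ^ 2) ^ α • y)
      ((1 + ‖x‖ ^ 2) ^ α • ContinuousLinearMap.id ℝ E +
        ((2 * α * (1 + ‖x‖ ^ 2) ^ (α - 1)) • innerSL ℝ x).smulRight x) x := by
  have hnorm : HasFDerivAt (fun y : E => 1 + ‖y‖ ^ 2) ((2 : ℝ) • innerSL ℝ x) x := by
    simpa [two_smul] using ((hasFDerivAt_id x).norm_sq).const_add 1
  have hweight := (Real.hasDerivAt_rpow_const (p := α)
    (Or.inl (by positivity : 1 + ‖x‖ ^ 2 ≠ 0))).comp_hasFDerivAt x hnorm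
  convert hweight.smul (hasFDerivAt_id x) using 1
  · rfl
  · rw [smul_smul, mul_comm _ (2 : ℝ), ← mul_assoc]
    rfl

theorem norm_one_add_norm_sq_rpow_smul_deriv_le {α : ℝ} (hα : 0 ≤ α) (x : E) :
    ‖(1 + ‖x‖ ^ 2) ^ α • ContinuousLinearMap.id ℝ E +
        ((2 * α * (1 + ‖x‖ ^ 2) ^ (α - 1)) • innerSL ℝ x).smulRight x‖ ≤
      (1 + 2 * α) * (1 + ‖x‖ ^ 2) ^ α := by
  have hpos : 0 < 1 + ‖x‖ ^ 2 := by positivity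
  have hsq : (1 + ‖x‖ ^ 2) ^ (α - 1) * ‖x‖ ^ 2 ≤ (1 + ‖x‖ ^ 2) ^ α := by
    calc (1 + ‖x‖ ^ 2) ^ (α - 1) * ‖x‖ ^ 2 ≤ (1 + ‖x‖ ^ 2) ^ (α - 1) * (1 + ‖x‖ ^ 2) := by
          gcongr; linarith
      _ = (1 + ‖x‖ ^ 2) ^ α := by rw [← rpow_add_one hpos.ne']; norm_num
  calc _ ≤ ‖(1 + ‖x‖ ^ 2) ^ α • ContinuousLinearMap.id ℝ E‖ +
        ‖((2 * α * (1 + ‖x‖ ^ 2) ^ (α - 1)) • innerSL ℝ x).smulRight x‖ := norm_add_le _ _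
    _ ≤ (1 + ‖x‖ ^ 2) ^ α + 2 * α * ((1 + ‖x‖ ^ 2) ^ (α - 1) * ‖x‖ ^ 2) := by
      gcongr
      · rw [norm_smul, Real.norm_of_nonneg (by positivity)]
        exact mul_le_of_le_one_right (by positivity) ContinuousLinearMap.norm_id_le
      · rw [ContinuousLinearMap.norm_smulRight_apply, norm_smul, innerSL_apply_norm,
          Real.norm_of_nonneg (by positivity)]
        exact le_of_eq (by ring)
    _ ≤ (1 + 2 * α) * (1 + ‖x‖ ^ 2) ^ α := by nlinarith

theorem norm_one_add_norm_sq_rpow_smul_sub_le {α : ℝ} (hα : 0 ≤ α) {R : ℝ} {x y : E}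
    (hx : ‖x‖ ≤ R) (hy : ‖y‖ ≤ R) :
    ‖(1 + ‖x‖ ^ 2) ^ α • x - (1 + ‖y‖ ^ 2) ^ α • y‖ ≤
      (1 + 2 * α) * (1 + R ^ 2) ^ α * ‖x - y‖ := by
  refine (convex_closedBall (0 : E) R).norm_image_sub_le_of_norm_hasFDerivWithin_le
    (fun z _ => (hasFDerivAt_one_add_norm_sq_rpow_smul α z).hasFDerivWithinAt) (fun z hz => ?_)
    (by simpa using hy) (by simpa using hx)
  have hzR : ‖z‖ ≤ R := by simpa using hz
  refine (norm_one_add_norm_sq_rpow_smul_deriv_le hα z).trans ?_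
  gcongr

theorem one_add_add_sq_le (a b : ℝ) : 1 + (a + b) ^ 2 ≤ 2 * (1 + a ^ 2) * (1 + b ^ 2) := by
  nlinarith [sq_nonneg (a - b), sq_nonneg (a * b)]

theorem norm_one_add_norm_sq_rpow_smul_sub_le_norm_sub {α : ℝ} (hα : 0 ≤ α) {M : ℝ} {z η : E}
    (hη : ‖η‖ ≤ M) :
    ‖(1 + ‖z‖ ^ 2) ^ α • z - (1 + ‖η‖ ^ 2) ^ α • η‖ ≤
      (1 + 2 * α) * (2 * (1 + M ^ 2)) ^ α * ‖(1 + ‖z - η‖ ^ 2) ^ α • (z - η)‖ := by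
  set d := ‖z - η‖
  have hz : ‖z‖ ≤ M + d := by
    calc ‖z‖ = ‖η + (z - η)‖ := by rw [add_sub_cancel]
      _ ≤ M + d := (norm_add_le _ _).trans (by gcongr)
  have hweight : (1 + (M + d) ^ 2) ^ α ≤ (2 * (1 + M ^ 2)) ^ α * (1 + d ^ 2) ^ α := by
    rw [← mul_rpow (by positivity) (by positivity)]
    exact rpow_le_rpow (by positivity) (one_add_add_sq_le M d) hα
  rw [norm_smul, Real.norm_of_nonneg (by positivity)]
  calc _ ≤ (1 + 2 * α) * (1 + (M + d) ^ 2) ^ α * d :=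
        norm_one_add_norm_sq_rpow_smul_sub_le hα hz (by linarith [norm_nonneg (z - η)])
    _ ≤ (1 + 2 * α) * ((2 * (1 + M ^ 2)) ^ α * (1 + d ^ 2) ^ α) * d := by gcongr
    _ = _ := by ring

end

theorem stmt_6_general {k : ℕ} (p : ℝ) (hp : 2 ≤ p) (M : ℝ) :
    ∃ c : ℝ, 0 < c ∧ ∀ z η : EuclideanSpace ℝ (Fin k), ‖η‖ ≤ M →
      ‖V p z - V p η‖ ≤ c * ‖V p (z - η)‖ := by
  have hα : 0 ≤ (p - 2) / 4 := by linarith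
  exact ⟨_, by positivity, fun z η hη => norm_one_add_norm_sq_rpow_smul_sub_le_norm_sub hα hη⟩

theorem stmt_6 {k : ℕ} (p : ℝ) (hp : 2 ≤ p) (M : ℝ) (hM : 0 < M) :
    ∃ c : ℝ, 0 < c ∧ ∀ z η : EuclideanSpace ℝ (Fin k), ‖η‖ ≤ M →
      ‖V p z - V p η‖ ≤ c * ‖V p (z - η)‖ :=
  stmt_6_general p hp M
end

section
/- If p ≥ 2, there is a constant c = c(k,p) such that for all z, η ∈ ℝ^k: |V_p(z - η)| ≤ c |V_p(z) - V_p(η)|. -/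
/-!
With `α = (p - 2)/4 ≥ 0` and `w(x) = (1 + ‖x‖²)^α` we have `V x = w(x) x`. Polarising,
`⟪w(z) z - w(η) η, z - η⟫ = (w(z) + w(η))/2 ‖z - η‖² + (w(z) - w(η))/2 (‖z‖² - ‖η‖²)`,
and the last term is nonnegative because `w` is a nondecreasing function of `‖x‖²`.
Cauchy–Schwarz then gives `(w(z) + w(η))/2 ‖z - η‖ ≤ ‖V z - V η‖`, and
`w(z - η) ≤ 4^α (w(z) + w(η))` since `‖z - η‖ ≤ 2 max ‖z‖ ‖η‖`.
-/

open Real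

lemma rpow_sub_rpow_mul_sub_nonneg {α x y : ℝ} (hα : 0 ≤ α) (hx : 0 ≤ x) (hy : 0 ≤ y) :
    0 ≤ (x ^ α - y ^ α) * (x - y) := by
  rcases le_total x y with hxy | hxy
  · exact mul_nonneg_of_nonpos_of_nonpos
      (sub_nonpos.mpr (rpow_le_rpow hx hxy hα)) (sub_nonpos.mpr hxy)
  · exact mul_nonneg (sub_nonneg.mpr (rpow_le_rpow hy hxy hα)) (sub_nonneg.mpr hxy)

lemma one_add_norm_sub_sq_rpow_le {E : Type*} [SeminormedAddCommGroup E] {α : ℝ} (hα : 0 ≤ α)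
    (x y : E) :
    (1 + ‖x - y‖ ^ 2) ^ α ≤ 4 ^ α * ((1 + ‖x‖ ^ 2) ^ α + (1 + ‖y‖ ^ 2) ^ α) := by
  set m := max ‖x‖ ‖y‖
  have hd : ‖x - y‖ ≤ 2 * m := by
    linarith [norm_sub_le x y, le_max_left ‖x‖ ‖y‖, le_max_right ‖x‖ ‖y‖]
  have hm : (1 + m ^ 2) ^ α ≤ (1 + ‖x‖ ^ 2) ^ α + (1 + ‖y‖ ^ 2) ^ α := by
    have hx : 0 ≤ (1 + ‖x‖ ^ 2) ^ α := by positivity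
    have hy : 0 ≤ (1 + ‖y‖ ^ 2) ^ α := by positivity
    rcases max_choice ‖x‖ ‖y‖ with h | h <;> simp only [m, h] <;> linarith
  calc (1 + ‖x - y‖ ^ 2) ^ α ≤ (4 * (1 + m ^ 2)) ^ α :=
        rpow_le_rpow (by positivity) (by nlinarith [norm_nonneg (x - y)]) hα
    _ = 4 ^ α * (1 + m ^ 2) ^ α := mul_rpow (by norm_num) (by positivity)
    _ ≤ 4 ^ α * ((1 + ‖x‖ ^ 2) ^ α + (1 + ‖y‖ ^ 2) ^ α) := by gcongr

section InnerProductSpace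

open scoped InnerProductSpace

variable {E : Type*} [NormedAddCommGroup E] [InnerProductSpace ℝ E]

lemma inner_smul_sub_smul_sub (s t : ℝ) (x y : E) :
    ⟪s • x - t • y, x - y⟫_ℝ =
      (s + t) / 2 * ‖x - y‖ ^ 2 + (s - t) / 2 * (‖x‖ ^ 2 - ‖y‖ ^ 2) := by
  rw [norm_sub_sq_real]
  simp only [inner_sub_left, inner_sub_right, real_inner_smul_left,
    real_inner_self_eq_norm_sq, real_inner_comm x y]
  ring

lemma add_div_two_mul_norm_sub_le {s t : ℝ} {x y : E}
    (h : 0 ≤ (s - t) * (‖x‖ ^ 2 - ‖y‖ ^ 2)) :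
    (s + t) / 2 * ‖x - y‖ ≤ ‖s • x - t • y‖ := by
  rcases (norm_nonneg (x - y)).eq_or_lt with hxy | hxy
  · rw [← hxy, mul_zero]
    exact norm_nonneg _
  refine le_of_mul_le_mul_right ?_ hxy
  calc (s + t) / 2 * ‖x - y‖ * ‖x - y‖
      ≤ (s + t) / 2 * ‖x - y‖ ^ 2 + (s - t) / 2 * (‖x‖ ^ 2 - ‖y‖ ^ 2) := by nlinarith
    _ = ⟪s • x - t • y, x - y⟫_ℝ := (inner_smul_sub_smul_sub s t x y).symm
    _ ≤ ‖s • x - t • y‖ * ‖x - y‖ := real_inner_le_norm _ _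

end InnerProductSpace

theorem stmt_7 {k : ℕ} (p : ℝ) (hp : 2 ≤ p) :
    ∃ c : ℝ, 0 < c ∧ ∀ z η : EuclideanSpace ℝ (Fin k),
      ‖V p (z - η)‖ ≤ c * ‖V p z - V p η‖ := by
  set α := (p - 2) / 4
  have hα : 0 ≤ α := div_nonneg (by linarith) (by norm_num)
  refine ⟨2 * 4 ^ α, by positivity, fun z η => ?_⟩
  set wz := (1 + ‖z‖ ^ 2) ^ α
  set wη := (1 + ‖η‖ ^ 2) ^ α
  have hmono : 0 ≤ (wz - wη) * (‖z‖ ^ 2 - ‖η‖ ^ 2) := by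
    have := rpow_sub_rpow_mul_sub_nonneg hα (x := 1 + ‖z‖ ^ 2) (y := 1 + ‖η‖ ^ 2)
      (by positivity) (by positivity)
    rwa [add_sub_add_left_eq_sub] at this
  calc ‖V p (z - η)‖ = (1 + ‖z - η‖ ^ 2) ^ α * ‖z - η‖ := norm_smul_of_nonneg (by positivity) _
    _ ≤ 4 ^ α * (wz + wη) * ‖z - η‖ := by
        gcongr
        exact one_add_norm_sub_sq_rpow_le hα z η
    _ = 2 * 4 ^ α * ((wz + wη) / 2 * ‖z - η‖) := by ring
    _ ≤ 2 * 4 ^ α * ‖V p z - V p η‖ := by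
        gcongr
        exact add_div_two_mul_norm_sub_le hmono
end

section
/- If 1 < p < 2 and M > 0, there is a constant c = c(k,p,M) such that for all z, η ∈ ℝ^k with |η| ≤ M: |V_p(z - η)| ≤ c |V_p(z) - V_p(η)|. -/
/-!
The scalar profile `t ↦ (1 + t²)^((p-2)/4) t` has derivative
`(1 + t²)^((p-2)/4 - 1) (1 + p t²/2) ≥ (p/2) (1 + t²)^((p-2)/4)`, so by the mean value theorem
`V p` is strongly monotone: `⟪V p z - V p η, z - η⟫ ≥ (p/2) h ‖z - η‖²` with
`h = (1 + ‖z‖² + ‖η‖²)^((p-2)/4)`. Both sides are affine in `⟪z, η⟫`, so it suffices to check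
`⟪z, η⟫ = ±‖z‖‖η‖`, where it is the scalar inequality. Cauchy–Schwarz then gives
`‖V p z - V p η‖ ≥ (p/2) h ‖z - η‖`, and since `‖η‖ ≤ M` forces
`1 + ‖z‖² + ‖η‖² ≤ (2 + 3M²)(1 + ‖z - η‖²)`, the exponent being negative turns `h ‖z - η‖` into
at least `(2 + 3M²)^((p-2)/4) ‖V p (z - η)‖`.
-/

open Real

open scoped RealInnerProductSpace

theorem one_add_sq_rpow_eq_mul (e t : ℝ) :
    (1 + t ^ 2) ^ e = (1 + t ^ 2) ^ (e - 1) * (1 + t ^ 2) := by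
  rw [← rpow_add_one (by positivity), sub_add_cancel]

theorem hasDerivAt_one_add_sq_rpow_mul_self (p t : ℝ) :
    HasDerivAt (fun t : ℝ => (1 + t ^ 2) ^ ((p - 2) / 4) * t)
      ((1 + t ^ 2) ^ ((p - 2) / 4 - 1) * (1 + p / 2 * t ^ 2)) t := by
  have hsq : HasDerivAt (fun t : ℝ => 1 + t ^ 2) (2 * t) t := by
    simpa using (hasDerivAt_pow 2 t).const_add 1
  refine ((hsq.rpow_const (Or.inl (by positivity))).mul (hasDerivAt_id' t)).congr_deriv ?_
  rw [one_add_sq_rpow_eq_mul ((p - 2) / 4)]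
  ring

theorem half_mul_rpow_le_one_add_sq_rpow_mul {p : ℝ} (hp2 : p ≤ 2) (t : ℝ) :
    p / 2 * (1 + t ^ 2) ^ ((p - 2) / 4)
      ≤ (1 + t ^ 2) ^ ((p - 2) / 4 - 1) * (1 + p / 2 * t ^ 2) := by
  rw [one_add_sq_rpow_eq_mul, mul_left_comm]
  gcongr
  linarith

theorem half_mul_rpow_mul_sub_le_of_le {p a b : ℝ} (hp0 : 0 ≤ p) (hp2 : p ≤ 2)
    (hb : 0 ≤ b) (hba : b ≤ a) :
    p / 2 * (1 + a ^ 2 + b ^ 2) ^ ((p - 2) / 4) * (a - b)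
      ≤ (1 + a ^ 2) ^ ((p - 2) / 4) * a - (1 + b ^ 2) ^ ((p - 2) / 4) * b := by
  have hf := fun t => hasDerivAt_one_add_sq_rpow_mul_self p t
  refine (convex_Icc b a).mul_sub_le_image_sub_of_le_deriv
    (fun t _ => (hf t).continuousAt.continuousWithinAt)
    (fun t _ => (hf t).differentiableAt.differentiableWithinAt) (fun t ht => ?_)
    b (by simp [hba]) a (by simp [hba]) hba
  rw [interior_Icc] at ht
  rw [(hf t).deriv]
  refine le_trans ?_ (half_mul_rpow_le_one_add_sq_rpow_mul hp2 t)
  have hta : t ^ 2 ≤ a ^ 2 + b ^ 2 := by nlinarith [ht.1, ht.2]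
  gcongr ?_ * ?_
  exact rpow_le_rpow_of_nonpos (by positivity) (by linarith) (by linarith)

theorem half_mul_rpow_mul_sq_le {p a b : ℝ} (hp0 : 0 ≤ p) (hp2 : p ≤ 2)
    (ha : 0 ≤ a) (hb : 0 ≤ b) :
    p / 2 * (1 + a ^ 2 + b ^ 2) ^ ((p - 2) / 4) * (a - b) ^ 2
      ≤ ((1 + a ^ 2) ^ ((p - 2) / 4) * a - (1 + b ^ 2) ^ ((p - 2) / 4) * b) * (a - b) := by
  rcases le_total b a with hba | hab
  · have := half_mul_rpow_mul_sub_le_of_le hp0 hp2 hb hba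
    nlinarith [sub_nonneg.mpr hba]
  · have := half_mul_rpow_mul_sub_le_of_le hp0 hp2 ha hab
    rw [add_right_comm] at this
    nlinarith [sub_nonneg.mpr hab]

theorem sub_mul_nonneg_of_abs_le {A B s r : ℝ} (hs : |s| ≤ r)
    (hr : 0 ≤ A - B * r) (hr' : 0 ≤ A + B * r) : 0 ≤ A - B * s := by
  obtain ⟨hs₁, hs₂⟩ := abs_le.mp hs
  rcases le_total 0 B with hB | hB
  · nlinarith
  · nlinarith

theorem norm_V (p : ℝ) {k : ℕ} (z : EuclideanSpace ℝ (Fin k)) :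
    ‖V p z‖ = (1 + ‖z‖ ^ 2) ^ ((p - 2) / 4) * ‖z‖ := by
  rw [V, norm_smul, norm_of_nonneg (by positivity)]

theorem inner_V_sub_V (p : ℝ) {k : ℕ} (z η : EuclideanSpace ℝ (Fin k)) :
    ⟪V p z - V p η, z - η⟫
      = (1 + ‖z‖ ^ 2) ^ ((p - 2) / 4) * ‖z‖ ^ 2 + (1 + ‖η‖ ^ 2) ^ ((p - 2) / 4) * ‖η‖ ^ 2
        - ((1 + ‖z‖ ^ 2) ^ ((p - 2) / 4) + (1 + ‖η‖ ^ 2) ^ ((p - 2) / 4)) * ⟪z, η⟫ := by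
  simp only [V, inner_sub_left, inner_sub_right, real_inner_smul_left, real_inner_self_eq_norm_sq,
    real_inner_comm z η]
  ring

theorem half_mul_rpow_mul_norm_sub_sq_le_inner {p : ℝ} (hp0 : 0 ≤ p) (hp2 : p ≤ 2) {k : ℕ}
    (z η : EuclideanSpace ℝ (Fin k)) :
    p / 2 * (1 + ‖z‖ ^ 2 + ‖η‖ ^ 2) ^ ((p - 2) / 4) * ‖z - η‖ ^ 2
      ≤ ⟪V p z - V p η, z - η⟫ := by
  set a := ‖z‖
  set b := ‖η‖
  set h := (1 + a ^ 2 + b ^ 2) ^ ((p - 2) / 4)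
  set Gz := (1 + a ^ 2) ^ ((p - 2) / 4)
  set Gη := (1 + b ^ 2) ^ ((p - 2) / 4)
  have ha : 0 ≤ a := norm_nonneg z
  have hb : 0 ≤ b := norm_nonneg η
  have hh : 0 ≤ h := by positivity
  have hGz : p / 2 * h ≤ Gz := (mul_le_of_le_one_left hh (by linarith)).trans <|
    rpow_le_rpow_of_nonpos (by positivity) (by nlinarith) (by linarith)
  have hGη : p / 2 * h ≤ Gη := (mul_le_of_le_one_left hh (by linarith)).trans <|
    rpow_le_rpow_of_nonpos (by positivity) (by nlinarith) (by linarith)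
  rw [inner_V_sub_V, norm_sub_sq_real, ← sub_nonneg]
  convert sub_mul_nonneg_of_abs_le (A := Gz * a ^ 2 + Gη * b ^ 2 - p / 2 * h * (a ^ 2 + b ^ 2))
    (B := Gz + Gη - p * h) (abs_real_inner_le_norm z η) ?_ ?_ using 1
  · ring
  · linear_combination half_mul_rpow_mul_sq_le hp0 hp2 ha hb
  · nlinarith [mul_le_mul_of_nonneg_right hGz ha, mul_le_mul_of_nonneg_right hGη hb]

theorem half_mul_rpow_mul_norm_sub_le_norm_V_sub_V {p : ℝ} (hp0 : 0 ≤ p) (hp2 : p ≤ 2) {k : ℕ}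
    (z η : EuclideanSpace ℝ (Fin k)) :
    p / 2 * (1 + ‖z‖ ^ 2 + ‖η‖ ^ 2) ^ ((p - 2) / 4) * ‖z - η‖ ≤ ‖V p z - V p η‖ := by
  rcases (norm_nonneg (z - η)).eq_or_lt with hzη | hzη
  · rw [← hzη, mul_zero]
    exact norm_nonneg _
  refine le_of_mul_le_mul_right ?_ hzη
  calc _ = p / 2 * (1 + ‖z‖ ^ 2 + ‖η‖ ^ 2) ^ ((p - 2) / 4) * ‖z - η‖ ^ 2 := by ring
    _ ≤ ⟪V p z - V p η, z - η⟫ := half_mul_rpow_mul_norm_sub_sq_le_inner hp0 hp2 z η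
    _ ≤ ‖V p z - V p η‖ * ‖z - η‖ := real_inner_le_norm _ _

theorem one_add_norm_sq_add_norm_sq_le {k : ℕ} {M : ℝ} (z η : EuclideanSpace ℝ (Fin k))
    (hη : ‖η‖ ≤ M) : 1 + ‖z‖ ^ 2 + ‖η‖ ^ 2 ≤ (2 + 3 * M ^ 2) * (1 + ‖z - η‖ ^ 2) := by
  have hz : ‖z‖ ≤ ‖z - η‖ + ‖η‖ := norm_le_norm_sub_add z η
  have hη' : ‖η‖ ^ 2 ≤ M ^ 2 := pow_le_pow_left₀ (norm_nonneg η) hη 2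
  nlinarith [pow_le_pow_left₀ (norm_nonneg z) hz 2, sq_nonneg (‖z - η‖ - ‖η‖),
    mul_nonneg (sq_nonneg M) (sq_nonneg ‖z - η‖)]

theorem rpow_mul_norm_V_sub_le {p : ℝ} (hp2 : p ≤ 2) {k : ℕ} {M : ℝ}
    (z η : EuclideanSpace ℝ (Fin k)) (hη : ‖η‖ ≤ M) :
    (2 + 3 * M ^ 2) ^ ((p - 2) / 4) * ‖V p (z - η)‖
      ≤ (1 + ‖z‖ ^ 2 + ‖η‖ ^ 2) ^ ((p - 2) / 4) * ‖z - η‖ := by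
  rw [norm_V, ← mul_assoc, ← mul_rpow (by positivity) (by positivity)]
  refine mul_le_mul_of_nonneg_right ?_ (norm_nonneg _)
  exact rpow_le_rpow_of_nonpos (by positivity) (one_add_norm_sq_add_norm_sq_le z η hη)
    (by linarith)

theorem stmt_8_general {k : ℕ} (p : ℝ) (hp1 : 1 < p) (hp2 : p < 2) (M : ℝ) :
    ∃ c : ℝ, 0 < c ∧ ∀ z η : EuclideanSpace ℝ (Fin k), ‖η‖ ≤ M →
      ‖V p (z - η)‖ ≤ c * ‖V p z - V p η‖ := by
  have hp0 : 0 < p := by linarith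
  have hK : 0 < p / 2 * (2 + 3 * M ^ 2) ^ ((p - 2) / 4) := by positivity
  refine ⟨(p / 2 * (2 + 3 * M ^ 2) ^ ((p - 2) / 4))⁻¹, inv_pos.mpr hK, fun z η hη => ?_⟩
  rw [← div_eq_inv_mul, le_div_iff₀' hK]
  calc p / 2 * (2 + 3 * M ^ 2) ^ ((p - 2) / 4) * ‖V p (z - η)‖
      ≤ p / 2 * (1 + ‖z‖ ^ 2 + ‖η‖ ^ 2) ^ ((p - 2) / 4) * ‖z - η‖ := by
        rw [mul_assoc, mul_assoc]
        exact mul_le_mul_of_nonneg_left (rpow_mul_norm_V_sub_le hp2.le z η hη) (by positivity)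
    _ ≤ ‖V p z - V p η‖ := half_mul_rpow_mul_norm_sub_le_norm_V_sub_V hp0.le hp2.le z η

theorem stmt_8 {k : ℕ} (p : ℝ) (hp1 : 1 < p) (hp2 : p < 2) (M : ℝ) (hM : 0 < M) :
    ∃ c : ℝ, 0 < c ∧ ∀ z η : EuclideanSpace ℝ (Fin k), ‖η‖ ≤ M →
      ‖V p (z - η)‖ ≤ c * ‖V p z - V p η‖ :=
  stmt_8_general p hp1 hp2 M
end
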